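/- Let m ≥ 2 be an integer and ω ∈ (0, m−1] irrational, with digits bₙ(ω), iterates τ_m^n(ω), and continuants pₙ, qₙ as in the m-adic continued fraction algorithm. Then for all n ≥ 1, ω − pₙ/qₙ = (−1)^n · τ_m^n(ω) · m^{b₁+⋯+bₙ} / (qₙ · (qₙ + τ_m^n(ω)·m^{bₙ}·qₙ₋₁)). -/

import Mathlib

/-!
For `x > 0` the definition of `τ_m` unfolds to `x = 1 / (m ^ b₁(x) (1 + τ_m x))`, so the iterates
`xₙ = τ_mⁿ ω` satisfy `xₙ = 1 / (Mₙ₊₁ (1 + xₙ₊₁))` with `Mₙ = m ^ bₙ`, and irrationality keeps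
every `xₙ` positive. Substituting this step by step into the continuant recurrence gives
`ω = (pₙ + xₙ Mₙ pₙ₋₁) / (qₙ + xₙ Mₙ qₙ₋₁)`, and the error formula follows from the determinant
identity `pₙ₊₁ qₙ - pₙ qₙ₊₁ = (-1)ⁿ M₁ ⋯ Mₙ`.
-/

noncomputable def b1 (m : ℕ) (x : ℝ) : ℤ := ⌊Real.log x⁻¹ / Real.log m⌋

noncomputable def tau (m : ℕ) (x : ℝ) : ℝ :=
  (m : ℝ) ^ (Real.log x⁻¹ / Real.log m - (b1 m x : ℝ)) - 1

noncomputable def digit (m : ℕ) (ω : ℝ) (n : ℕ) : ℤ := b1 m ((tau m)^[n - 1] ω)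

lemma zpow_sum₀ {G₀ ι : Type*} [CommGroupWithZero G₀] {a : G₀} (ha : a ≠ 0) (s : Finset ι)
    (f : ι → ℤ) : a ^ (∑ i ∈ s, f i) = ∏ i ∈ s, a ^ f i := by
  classical
  induction s using Finset.induction_on with
  | empty => simp
  | insert i s hi ih => rw [Finset.sum_insert hi, Finset.prod_insert hi, zpow_add₀ ha, ih]

section Continuants

variable {R : Type*} {M p q : ℕ → R}

lemma continuant_det [CommRing R] (hp0 : p 0 = 0) (hq0 : q 0 = 1) (hp1 : p 1 = 1)
    (hp : ∀ n, p (n + 2) = M (n + 2) * p (n + 1) + M (n + 1) * p n)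
    (hq : ∀ n, q (n + 2) = M (n + 2) * q (n + 1) + M (n + 1) * q n) (k : ℕ) :
    p (k + 1) * q k - p k * q (k + 1) = (-1) ^ k * ∏ j ∈ Finset.Icc 1 k, M j := by
  induction k with
  | zero => simp [hp0, hq0, hp1]
  | succ k ih =>
    rw [hp, hq, Finset.prod_Icc_succ_top (by omega), pow_succ]
    linear_combination -M (k + 1) * ih

lemma continuant_complete_quotient [CommRing R] {x : ℕ → R}
    (hx : ∀ k, x k * (M (k + 1) * (1 + x (k + 1))) = 1)
    (hp0 : p 0 = 0) (hq0 : q 0 = 1) (hp1 : p 1 = 1) (hq1 : q 1 = M 1)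
    (hp : ∀ n, p (n + 2) = M (n + 2) * p (n + 1) + M (n + 1) * p n)
    (hq : ∀ n, q (n + 2) = M (n + 2) * q (n + 1) + M (n + 1) * q n) (k : ℕ) :
    x 0 * (q (k + 1) + x (k + 1) * M (k + 1) * q k) = p (k + 1) + x (k + 1) * M (k + 1) * p k := by
  induction k with
  | zero => rw [hp0, hq0, hp1, hq1]; linear_combination hx 0
  | succ k ih =>
    rw [hp, hq]
    linear_combination M (k + 2) * (1 + x (k + 2)) * ih - M (k + 1) * (q k * x 0 - p k) * hx (k + 1)

lemma continuant_pos [CommSemiring R] [PartialOrder R] [IsStrictOrderedRing R]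
    (hM : ∀ n, 0 < M n) (hq0 : q 0 = 1) (hq1 : q 1 = M 1)
    (hq : ∀ n, q (n + 2) = M (n + 2) * q (n + 1) + M (n + 1) * q n) (n : ℕ) : 0 < q n := by
  induction n using Nat.strong_induction_on with
  | _ n ih =>
    match n, ih with
    | 0, _ => rw [hq0]; exact one_pos
    | 1, _ => rw [hq1]; exact hM 1
    | n + 2, ih =>
      rw [hq]
      have := ih (n + 1) (by omega)
      have := ih n (by omega)
      have := hM (n + 1)
      have := hM (n + 2)
      positivity

lemma continuant_error [Field R] {x : ℕ → R}
    (hx : ∀ k, x k * (M (k + 1) * (1 + x (k + 1))) = 1)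
    (hp0 : p 0 = 0) (hq0 : q 0 = 1) (hp1 : p 1 = 1) (hq1 : q 1 = M 1)
    (hp : ∀ n, p (n + 2) = M (n + 2) * p (n + 1) + M (n + 1) * p n)
    (hq : ∀ n, q (n + 2) = M (n + 2) * q (n + 1) + M (n + 1) * q n) {n : ℕ} (hn : 1 ≤ n)
    (hqn : q n ≠ 0) (hD : q n + x n * M n * q (n - 1) ≠ 0) :
    x 0 - p n / q n =
      (-1) ^ n * x n * (∏ j ∈ Finset.Icc 1 n, M j) / (q n * (q n + x n * M n * q (n - 1))) := by
  obtain ⟨k, rfl⟩ : ∃ k, n = k + 1 := ⟨n - 1, by omega⟩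
  simp only [Nat.add_sub_cancel] at hD ⊢
  have hdet := continuant_det hp0 hq0 hp1 hp hq k
  have hx0 := continuant_complete_quotient hx hp0 hq0 hp1 hq1 hp hq k
  rw [sub_div' hqn, div_eq_div_iff hqn (mul_ne_zero hqn hD), Finset.prod_Icc_succ_top (by omega),
    pow_succ]
  linear_combination q (k + 1) * (q (k + 1) * hx0 - x (k + 1) * M (k + 1) * hdet)

end Continuants

section Tau

variable {m : ℕ} {x : ℝ}

lemma tau_eq_inv_sub_one (hm : 1 < m) (hx : 0 < x) : tau m x = (x * (m : ℝ) ^ b1 m x)⁻¹ - 1 := by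
  have hm0 : (0 : ℝ) < m := by positivity
  have hm1 : (m : ℝ) ≠ 1 := by exact_mod_cast hm.ne'
  have hlog : (m : ℝ) ^ (Real.log x⁻¹ / Real.log m) = x⁻¹ := by
    simpa [Real.logb] using Real.rpow_logb hm0 hm1 (inv_pos.mpr hx)
  rw [tau, Real.rpow_sub hm0, Real.rpow_intCast, hlog, mul_inv, div_eq_mul_inv]

lemma mul_zpow_b1_mul_one_add_tau (hm : 1 < m) (hx : 0 < x) :
    x * ((m : ℝ) ^ b1 m x * (1 + tau m x)) = 1 := by
  have : (m : ℝ) ^ b1 m x ≠ 0 := zpow_ne_zero _ (by positivity)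
  rw [tau_eq_inv_sub_one hm hx]
  field_simp
  ring

lemma Irrational.tau (hm : 1 < m) (hx : 0 < x) (h : Irrational x) : Irrational (tau m x) := by
  have hq : ((m : ℚ) ^ b1 m x) ≠ 0 := zpow_ne_zero _ (by exact_mod_cast (by omega : m ≠ 0))
  rw [tau_eq_inv_sub_one hm hx]
  simpa using ((h.mul_ratCast hq).inv).sub_intCast 1

lemma tau_nonneg (hm : 1 ≤ m) (x : ℝ) : 0 ≤ tau m x := by
  have : (1 : ℝ) ≤ (m : ℝ) ^ (Real.log x⁻¹ / Real.log m - (b1 m x : ℝ)) :=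
    Real.one_le_rpow (by exact_mod_cast hm) (sub_nonneg.mpr (Int.floor_le _))
  rw [tau]
  linarith

lemma iterate_tau_pos_irrational (hm : 1 < m) (hx : 0 < x) (h : Irrational x) (n : ℕ) :
    0 < (tau m)^[n] x ∧ Irrational ((tau m)^[n] x) := by
  induction n with
  | zero => exact ⟨hx, h⟩
  | succ n ih =>
    rw [Function.iterate_succ_apply']
    have hirr := ih.2.tau hm ih.1
    exact ⟨(tau_nonneg hm.le _).lt_of_ne' hirr.ne_zero, hirr⟩

end Tau

theorem error_formula_general (m : ℕ) (hm : 2 ≤ m) (ω : ℝ) (hω : Irrational ω) (hω0 : 0 < ω)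
    (p q : ℕ → ℝ)
    (hp0 : p 0 = 0) (hq0 : q 0 = 1) (hp1 : p 1 = 1) (hq1 : q 1 = (m : ℝ) ^ (digit m ω 1))
    (hp : ∀ n, 2 ≤ n → p n = (m : ℝ) ^ (digit m ω n) * p (n - 1) + (m : ℝ) ^ (digit m ω (n - 1)) * p (n - 2))
    (hq : ∀ n, 2 ≤ n → q n = (m : ℝ) ^ (digit m ω n) * q (n - 1) + (m : ℝ) ^ (digit m ω (n - 1)) * q (n - 2)) :
    ∀ n, 1 ≤ n →
      ω - p n / q n =
        (-1 : ℝ) ^ n * (tau m)^[n] ω * (m : ℝ) ^ (∑ k ∈ Finset.Icc 1 n, digit m ω k) /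
          (q n * (q n + (tau m)^[n] ω * (m : ℝ) ^ (digit m ω n) * q (n - 1))) := by
  intro n hn
  have hm0 : (0 : ℝ) < m := by positivity
  have hx : ∀ k, (tau m)^[k] ω *
      ((m : ℝ) ^ digit m ω (k + 1) * (1 + (tau m)^[k + 1] ω)) = 1 := fun k => by
    rw [Function.iterate_succ_apply']
    exact mul_zpow_b1_mul_one_add_tau hm (iterate_tau_pos_irrational hm hω0 hω k).1
  have hp' : ∀ n, p (n + 2) =
      (m : ℝ) ^ digit m ω (n + 2) * p (n + 1) + (m : ℝ) ^ digit m ω (n + 1) * p n :=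
    fun n => hp (n + 2) (by omega)
  have hq' : ∀ n, q (n + 2) =
      (m : ℝ) ^ digit m ω (n + 2) * q (n + 1) + (m : ℝ) ^ digit m ω (n + 1) * q n :=
    fun n => hq (n + 2) (by omega)
  have hqpos := continuant_pos (fun k => zpow_pos hm0 (digit m ω k)) hq0 hq1 hq'
  have hD : 0 < q n + (tau m)^[n] ω * (m : ℝ) ^ digit m ω n * q (n - 1) := by
    have := (iterate_tau_pos_irrational hm hω0 hω n).1
    have := zpow_pos hm0 (digit m ω n)
    have := hqpos (n - 1)
    have := hqpos n
    positivity
  rw [zpow_sum₀ hm0.ne']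
  exact continuant_error (x := fun k => (tau m)^[k] ω) (M := fun k => (m : ℝ) ^ digit m ω k)
    hx hp0 hq0 hp1 hq1 hp' hq' hn (hqpos n).ne' hD.ne'

theorem error_formula (m : ℕ) (hm : 2 ≤ m) (ω : ℝ) (hω : Irrational ω) (hω0 : 0 < ω) (hω1 : ω ≤ (m : ℝ) - 1)
    (p q : ℕ → ℝ)
    (hp0 : p 0 = 0) (hq0 : q 0 = 1) (hp1 : p 1 = 1) (hq1 : q 1 = (m : ℝ) ^ (digit m ω 1))
    (hp : ∀ n, 2 ≤ n → p n = (m : ℝ) ^ (digit m ω n) * p (n - 1) + (m : ℝ) ^ (digit m ω (n - 1)) * p (n - 2))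
    (hq : ∀ n, 2 ≤ n → q n = (m : ℝ) ^ (digit m ω n) * q (n - 1) + (m : ℝ) ^ (digit m ω (n - 1)) * q (n - 2)) :
    ∀ n, 1 ≤ n →
      ω - p n / q n =
        (-1 : ℝ) ^ n * (tau m)^[n] ω * (m : ℝ) ^ (∑ k ∈ Finset.Icc 1 n, digit m ω k) /
          (q n * (q n + (tau m)^[n] ω * (m : ℝ) ^ (digit m ω n) * q (n - 1))) :=
  error_formula_general m hm ω hω hω0 p q hp0 hq0 hp1 hq1 hp hq
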